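/- The group inverse of the Laplacian admits the representation L^# = (L + αJ̃)^{-1} − α^{-1}J̃ for every α ≠ 0; equivalently L^# = (L + αJ̃)^{-1}(I − J̃), and J̃ = I − LL^#. -/

import Mathlib

open Matrix Finset Polynomial

/-- `A` is (the arc set of) an in-forest of the weighted digraph with arc-weight
matrix `W`: all arcs are loopless arcs of positive weight, every vertex has
outdegree at most one, and there are no directed cycles. -/
def IsInForest {n : ℕ} (W : Matrix (Fin n) (Fin n) ℝ)
    (A : Finset (Fin n × Fin n)) : Prop :=
  (∀ e ∈ A, e.1 ≠ e.2 ∧ 0 < W e.1 e.2) ∧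
  (∀ i : Fin n, (A.filter (fun e => e.1 = i)).card ≤ 1) ∧
  (∀ i : Fin n, ¬ Relation.TransGen (fun a b => (a, b) ∈ A) i i)

/-- The weight of a forest: the product of its arc weights. -/
def forestWeight {n : ℕ} (W : Matrix (Fin n) (Fin n) ℝ)
    (A : Finset (Fin n × Fin n)) : ℝ :=
  ∏ e ∈ A, W e.1 e.2

/-- `i` belongs to the tree of the forest `A` converging to (rooted at) `j`. -/
def InTreeRootedAt {n : ℕ} (A : Finset (Fin n × Fin n)) (i j : Fin n) : Prop :=
  Relation.ReflTransGen (fun a b => (a, b) ∈ A) i j ∧ ∀ e ∈ A, e.1 ≠ j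

open scoped Classical in
/-- `σ_k`: the total weight of in-forests with `k` arcs. -/
noncomputable def sigmaW {n : ℕ} (W : Matrix (Fin n) (Fin n) ℝ) (k : ℕ) : ℝ :=
  ∑ A ∈ Finset.univ.powerset.filter
      (fun A => IsInForest W A ∧ A.card = k), forestWeight W A

open scoped Classical in
/-- `Q_k`: the matrix of in-forests with `k` arcs; its `(i,j)` entry is the total
weight of in-forests with `k` arcs in which `i` belongs to a tree rooted at `j`. -/
noncomputable def forestMatrix {n : ℕ} (W : Matrix (Fin n) (Fin n) ℝ) (k : ℕ) :
    Matrix (Fin n) (Fin n) ℝ :=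
  Matrix.of fun i j =>
    ∑ A ∈ Finset.univ.powerset.filter
        (fun A => IsInForest W A ∧ A.card = k ∧ InTreeRootedAt A i j),
      forestWeight W A

open scoped Classical in
/-- `σ`: the total weight of all in-forests. -/
noncomputable def sigmaTot {n : ℕ} (W : Matrix (Fin n) (Fin n) ℝ) : ℝ :=
  ∑ A ∈ Finset.univ.powerset.filter (fun A => IsInForest W A), forestWeight W A

open scoped Classical in
/-- `Q`: the matrix of all in-forests. -/
noncomputable def forestMatrixTot {n : ℕ} (W : Matrix (Fin n) (Fin n) ℝ) :
    Matrix (Fin n) (Fin n) ℝ :=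
  Matrix.of fun i j =>
    ∑ A ∈ Finset.univ.powerset.filter
        (fun A => IsInForest W A ∧ InTreeRootedAt A i j), forestWeight W A

open scoped Classical in
/-- The number of arcs in a maximum in-forest (equal to `n - d` where `d` is the
in-forest dimension). -/
noncomputable def maxForestCard {n : ℕ} (W : Matrix (Fin n) (Fin n) ℝ) : ℕ :=
  (Finset.univ.powerset.filter (fun A => IsInForest W A)).sup Finset.card

/-- The in-forest dimension `d` of the digraph. -/
noncomputable def forestDim {n : ℕ} (W : Matrix (Fin n) (Fin n) ℝ) : ℕ :=
  n - maxForestCard W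

/-- The (row) Laplacian matrix of the weighted digraph with arc-weight matrix `W`. -/
def lap {n : ℕ} (W : Matrix (Fin n) (Fin n) ℝ) : Matrix (Fin n) (Fin n) ℝ :=
  Matrix.diagonal (fun i => ∑ j, W i j) - W

/-- `J̃`: the normalized matrix of maximum in-forests. -/
noncomputable def Jtilde {n : ℕ} (W : Matrix (Fin n) (Fin n) ℝ) :
    Matrix (Fin n) (Fin n) ℝ :=
  (sigmaW W (maxForestCard W))⁻¹ • forestMatrix W (maxForestCard W)

/-! Let `Q_k` be the matrix of in-forests with `k` arcs and `σ_k` their total weight.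
The entry `(L Q_k) i j = ∑_{i → l} W i l (Q_k i j - Q_k l j)` is a signed sum over pairs of an arc
`i → l` and a `k`-forest. Adding `i → l` to a forest in which `i` is a root and `l` does not reach
`i` gives every `(k+1)`-forest in which `i` is not a root exactly once; redirecting the out-arc of a
non-root `i` to `l` (unless that closes a cycle) is a weight-preserving involution exchanging
"`l` lies in the tree of `j`" with "`i` lies in the tree of `j`". Together these give the
recurrence `Q_{k+1} = σ_{k+1} I - L Q_k`.

With `m` the size of a maximum in-forest, `Q_{m+1} = 0` and `σ_{m+1} = 0`, so `L Q_m = Q_m L = 0`,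
while the recurrence gives `Q_m v = σ_m v` for `v ∈ ker L`. Hence `J̃ = Q_m / σ_m` is annihilated
by `L` on both sides and fixes `ker L`; this forces `J̃² = J̃` and makes `L + J̃` invertible, and
`X = (L + J̃)⁻¹ - J̃` is the group inverse, with `(L + α J̃)⁻¹ = X + α⁻¹ J̃`. -/

theorem Finset.sum_filter_nbij' {α β M : Type*} [AddCommMonoid M] {s : Finset α}
    {t : Finset β} {P : α → Prop} {Q : β → Prop} [DecidablePred P] [DecidablePred Q]
    {f : α → M} {g : β → M} (i : α → β) (j : β → α) (hi : ∀ a ∈ s, i a ∈ t)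
    (hj : ∀ b ∈ t, j b ∈ s) (left_inv : ∀ a ∈ s, j (i a) = a)
    (right_inv : ∀ b ∈ t, i (j b) = b) (hPQ : ∀ a ∈ s, P a ↔ Q (i a))
    (h : ∀ a ∈ s, f a = g (i a)) :
    ∑ a ∈ s.filter P, f a = ∑ b ∈ t.filter Q, g b := by
  refine sum_nbij' i j (fun a ha => ?_) (fun b hb => ?_)
    (fun a ha => left_inv a (mem_filter.mp ha).1) (fun b hb => right_inv b (mem_filter.mp hb).1)
    (fun a ha => h a (mem_filter.mp ha).1)
  · obtain ⟨has, hPa⟩ := mem_filter.mp ha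
    exact mem_filter.mpr ⟨hi a has, (hPQ a has).mp hPa⟩
  · obtain ⟨hbt, hQb⟩ := mem_filter.mp hb
    refine mem_filter.mpr ⟨hj b hbt, (hPQ _ (hj b hbt)).mpr ?_⟩
    rwa [right_inv b hbt]

theorem Finset.sum_mul_sum_filter {ι κ R : Type*} [NonUnitalNonAssocSemiring R] (s : Finset ι)
    (t : Finset κ) (P : ι → κ → Prop) [∀ a, DecidablePred (P a)] (f : ι → R) (g : κ → R) :
    ∑ a ∈ s, f a * ∑ b ∈ t.filter (P a), g b =
      ∑ p ∈ (s ×ˢ t).filter (fun p => P p.1 p.2), f p.1 * g p.2 := by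
  simp only [sum_filter, sum_product, mul_sum, mul_ite, mul_zero]

namespace Matrix

variable {m K : Type*} [Fintype m] [DecidableEq m] [Field K] {L J : Matrix m m K}

theorem mul_self_eq_of_mulVec_eq_self (hLJ : L * J = 0)
    (hker : ∀ v, L *ᵥ v = 0 → J *ᵥ v = v) : J * J = J :=
  ext_of_mulVec_single fun j => by
    rw [← mulVec_mulVec, hker _ (by rw [mulVec_mulVec, hLJ, zero_mulVec])]

theorem isUnit_det_add_of_mulVec_eq_self (hJL : J * L = 0) (hJJ : J * J = J)
    (hker : ∀ v, L *ᵥ v = 0 → J *ᵥ v = v) : IsUnit (L + J).det := by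
  rw [isUnit_iff_ne_zero]
  intro hdet
  obtain ⟨v, hv, hLJv⟩ := exists_mulVec_eq_zero_iff.mpr hdet
  have hJv : J *ᵥ v = 0 := by
    rw [← hJJ, ← zero_add (J * J), ← hJL, ← mul_add, ← mulVec_mulVec, hLJv, mulVec_zero]
  have hLv : L *ᵥ v = 0 := by rwa [add_mulVec, hJv, add_zero] at hLJv
  exact hv (by rw [← hker v hLv, hJv])

theorem exists_groupInverse_of_mulVec_eq_self (hLJ : L * J = 0) (hJL : J * L = 0)
    (hker : ∀ v, L *ᵥ v = 0 → J *ᵥ v = v) :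
    ∃ X : Matrix m m K, L * X * L = L ∧ X * L * X = X ∧ L * X = X * L ∧
      (∀ α : K, α ≠ 0 → X = (L + α • J)⁻¹ - α⁻¹ • J ∧ X = (L + α • J)⁻¹ * (1 - J)) ∧
      J = 1 - L * X := by
  have hJJ := mul_self_eq_of_mulVec_eq_self hLJ hker
  have hdet := isUnit_det_add_of_mulVec_eq_self hJL hJJ hker
  set N := (L + J)⁻¹
  have hJN : J * N = J := calc
    J * N = J * (L + J) * N := by rw [mul_add, hJL, zero_add, hJJ]
    _ = J := by rw [mul_assoc, mul_nonsing_inv _ hdet, mul_one]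
  have hNJ : N * J = J := calc
    N * J = N * ((L + J) * J) := by rw [add_mul, hLJ, zero_add, hJJ]
    _ = J := by rw [← mul_assoc, nonsing_inv_mul _ hdet, one_mul]
  have hLX : L * (N - J) = 1 - J := calc
    L * (N - J) = (L + J) * N - J * N := by
      rw [mul_sub, hLJ, add_mul, add_sub_cancel_right, sub_zero]
    _ = 1 - J := by rw [mul_nonsing_inv _ hdet, hJN]
  have hXL : (N - J) * L = 1 - J := calc
    (N - J) * L = N * (L + J) - N * J := by
      rw [sub_mul, hJL, mul_add, add_sub_cancel_right, sub_zero]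
    _ = 1 - J := by rw [nonsing_inv_mul _ hdet, hNJ]
  have hJX : J * (N - J) = 0 := by rw [mul_sub, hJN, hJJ, sub_self]
  have hXJ : (N - J) * J = 0 := by rw [sub_mul, hNJ, hJJ, sub_self]
  have hinv : ∀ α : K, α ≠ 0 → (L + α • J)⁻¹ = N - J + α⁻¹ • J := fun α hα => by
    refine inv_eq_right_inv ?_
    rw [add_mul, mul_add, mul_add, hLX, mul_smul_comm, hLJ, smul_mul_assoc, hJX, smul_mul_assoc,
      mul_smul_comm, hJJ, smul_smul, mul_inv_cancel₀ hα]
    simp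
  refine ⟨N - J, by rw [hLX, sub_mul, one_mul, hJL, sub_zero], by rw [hXL, sub_mul, one_mul, hJX,
    sub_zero], hLX.trans hXL.symm, fun α hα => ⟨?_, ?_⟩, by rw [hLX, sub_sub_cancel]⟩
  · rw [hinv α hα, add_sub_cancel_right]
  · rw [hinv α hα, add_mul, mul_sub, mul_one, hXJ, sub_zero, smul_mul_assoc, mul_sub, mul_one, hJJ,
      sub_self, smul_zero, add_zero]

end Matrix

section InForest

variable {n : ℕ} {W : Matrix (Fin n) (Fin n) ℝ} {A B C : Finset (Fin n × Fin n)}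
  {u v x y z : Fin n}

abbrev Reaches (A : Finset (Fin n × Fin n)) : Fin n → Fin n → Prop :=
  Relation.ReflTransGen fun a b => (a, b) ∈ A

def NoOutArc (A : Finset (Fin n × Fin n)) (v : Fin n) : Prop := ∀ e ∈ A, e.1 ≠ v

def IsArc (W : Matrix (Fin n) (Fin n) ℝ) (u v : Fin n) : Prop := u ≠ v ∧ 0 < W u v

theorem reaches_mono (h : A ⊆ B) (hr : Reaches A x y) : Reaches B x y :=
  Relation.ReflTransGen.mono (fun _ _ hab => h hab) x y hr

theorem reaches_insert (h : Reaches (insert (u, v) A) x y) :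
    Reaches A x y ∨ Reaches A x u ∧ Reaches (insert (u, v) A) v y := by
  induction h using Relation.ReflTransGen.head_induction_on with
  | refl => exact Or.inl .refl
  | head hab hby ih =>
    rcases mem_insert.mp hab with hab | hab
    · obtain ⟨rfl, rfl⟩ := Prod.mk.inj hab
      exact Or.inr ⟨.refl, hby⟩
    · rcases ih with h | ⟨h, hvy⟩
      exacts [Or.inl (.head hab h), Or.inr ⟨.head hab h, hvy⟩]

theorem noOutArc_empty : NoOutArc ∅ u := fun _ he => absurd he (notMem_empty _)

theorem NoOutArc.notMem (h : NoOutArc A u) : (u, v) ∉ A := fun huv => h _ huv rfl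

theorem NoOutArc.eq_of_reaches (h : NoOutArc A x) (hxy : Reaches A x y) : x = y := by
  rcases Relation.ReflTransGen.cases_head hxy with hxy | ⟨_, hxz, -⟩
  exacts [hxy, absurd rfl (h _ hxz)]

theorem not_noOutArc_iff : ¬NoOutArc A u ↔ ∃ v, (u, v) ∈ A := by
  simp only [NoOutArc, not_forall, not_not, Prod.exists]
  exact ⟨fun ⟨a, b, hab, ha⟩ => ⟨b, ha ▸ hab⟩, fun ⟨b, hb⟩ => ⟨u, b, hb, rfl⟩⟩

theorem isInForest_iff : IsInForest W A ↔ (∀ e ∈ A, IsArc W e.1 e.2) ∧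
    (∀ u v w, (u, v) ∈ A → (u, w) ∈ A → v = w) ∧ ∀ x y, (x, y) ∈ A → ¬Reaches A y x := by
  refine and_congr Iff.rfl (and_congr ⟨fun h u v w hv hw => ?_, fun h u => ?_⟩ ?_)
  · exact (Prod.mk.inj (card_le_one.mp (h u) _ (mem_filter.mpr ⟨hv, rfl⟩) _
      (mem_filter.mpr ⟨hw, rfl⟩))).2
  · refine card_le_one.mpr fun ⟨a, b⟩ hab ⟨c, d⟩ hcd => ?_
    simp only [mem_filter] at hab hcd
    obtain ⟨hb, rfl⟩ := hab
    obtain ⟨hd, rfl⟩ := hcd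
    rw [h _ _ _ hb hd]
  · simp only [Relation.TransGen.head'_iff, not_exists, not_and]

theorem isInForest_empty : IsInForest W ∅ :=
  isInForest_iff.mpr ⟨by simp, by simp, by simp⟩

theorem IsInForest.mono (hA : IsInForest W A) (h : B ⊆ A) : IsInForest W B := by
  obtain ⟨harc, huniq, hacyc⟩ := isInForest_iff.mp hA
  exact isInForest_iff.mpr ⟨fun e he => harc e (h he),
    fun u v w hv hw => huniq u v w (h hv) (h hw), fun x y hxy hyx => hacyc x y (h hxy)
      (reaches_mono h hyx)⟩

theorem IsInForest.isArc (hA : IsInForest W A) (h : (u, v) ∈ A) : IsArc W u v := hA.1 _ h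

theorem IsInForest.eq_of_mem (hA : IsInForest W A) (hv : (u, v) ∈ A) (hw : (u, w) ∈ A) :
    v = w :=
  (isInForest_iff.mp hA).2.1 u v w hv hw

theorem IsInForest.not_reaches_of_mem (hA : IsInForest W A) (h : (x, y) ∈ A) :
    ¬Reaches A y x :=
  (isInForest_iff.mp hA).2.2 x y h

theorem IsInForest.insert_of_noOutArc (hA : IsInForest W A) (hu : NoOutArc A u)
    (hvu : ¬Reaches A v u) (huv : IsArc W u v) : IsInForest W (insert (u, v) A) := by
  obtain ⟨harc, huniq, hacyc⟩ := isInForest_iff.mp hA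
  have hback : ¬Reaches (insert (u, v) A) v u := fun h => by
    rcases reaches_insert h with h | ⟨h, -⟩ <;> exact hvu h
  refine isInForest_iff.mpr ⟨fun e he => ?_, fun a b c hb hc => ?_, fun a b hab hba => ?_⟩
  · rcases mem_insert.mp he with rfl | he
    exacts [huv, harc e he]
  · rcases mem_insert.mp hb with hb | hb <;> rcases mem_insert.mp hc with hc | hc
    · exact (Prod.mk.inj hb).2.trans (Prod.mk.inj hc).2.symm
    · exact absurd (Prod.mk.inj hb).1 (hu _ hc)
    · exact absurd (Prod.mk.inj hc).1 (hu _ hb)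
    · exact huniq a b c hb hc
  · rcases mem_insert.mp hab with hab | hab
    · obtain ⟨rfl, rfl⟩ := Prod.mk.inj hab
      exact hback hba
    · rcases reaches_insert hba with h | ⟨h, hva⟩
      · exact hacyc a b hab h
      · exact hback (hva.trans (.head (mem_insert_of_mem hab) (reaches_mono (subset_insert _ _) h)))

theorem IsInForest.reaches_total (hA : IsInForest W A) (hxy : Reaches A x y)
    (hxz : Reaches A x z) : Reaches A y z ∨ Reaches A z y := by
  induction hxy using Relation.ReflTransGen.head_induction_on with
  | refl => exact Or.inl hxz
  | head hab hby ih =>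
    rcases Relation.ReflTransGen.cases_head hxz with rfl | ⟨c, hac, hcz⟩
    · exact Or.inr (.head hab hby)
    · exact ih (hA.eq_of_mem hac hab ▸ hcz)

theorem IsInForest.noOutArc_erase (hA : IsInForest W A) (h : (u, v) ∈ A) :
    NoOutArc (A.erase (u, v)) u := by
  rintro ⟨a, b⟩ he rfl
  obtain ⟨hne, he⟩ := mem_erase.mp he
  exact hne (by rw [hA.eq_of_mem he h])

theorem IsInForest.exists_eq_insert (hA : IsInForest W A) (h : ¬NoOutArc A u) :
    ∃ v C, A = insert (u, v) C ∧ NoOutArc C u := by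
  obtain ⟨v, hv⟩ := not_noOutArc_iff.mp h
  exact ⟨v, A.erase (u, v), (insert_erase hv).symm, hA.noOutArc_erase hv⟩

theorem IsInForest.forestWeight_pos (hA : IsInForest W A) : 0 < forestWeight W A :=
  prod_pos fun e he => (hA.isArc (u := e.1) (v := e.2) he).2

theorem forestWeight_insert (h : (u, v) ∉ A) :
    forestWeight W (insert (u, v) A) = W u v * forestWeight W A :=
  prod_insert h

theorem IsInForest.not_reaches_of_insert (hA : IsInForest W (insert (u, v) C)) :
    ¬Reaches C v u := fun h =>
  hA.not_reaches_of_mem (mem_insert_self _ _) (reaches_mono (subset_insert _ _) h)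

open scoped Classical in
noncomputable def outNeighbor (A : Finset (Fin n × Fin n)) (u : Fin n) : Fin n :=
  if h : ∃ v, (u, v) ∈ A then h.choose else u

theorem IsInForest.outNeighbor_eq (hA : IsInForest W A) (h : (u, v) ∈ A) :
    outNeighbor A u = v := by
  have hex : ∃ v, (u, v) ∈ A := ⟨v, h⟩
  rw [outNeighbor, dif_pos hex]
  exact hA.eq_of_mem hex.choose_spec h

theorem inTreeRootedAt_self : InTreeRootedAt A u u ↔ NoOutArc A u :=
  ⟨And.right, fun h => ⟨.refl, h⟩⟩

theorem inTreeRootedAt_empty : InTreeRootedAt ∅ x z ↔ x = z :=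
  ⟨fun h => noOutArc_empty.eq_of_reaches h.1, fun h => h ▸ inTreeRootedAt_self.mpr noOutArc_empty⟩

theorem InTreeRootedAt.not_noOutArc (h : InTreeRootedAt A x z) (hxz : x ≠ z) : ¬NoOutArc A x :=
  fun hx => hxz (hx.eq_of_reaches h.1)

theorem IsInForest.inTreeRootedAt_iff_of_reaches (hA : IsInForest W A) (hxy : Reaches A x y) :
    InTreeRootedAt A x z ↔ InTreeRootedAt A y z := by
  refine ⟨fun ⟨hxz, hz⟩ => ⟨?_, hz⟩, fun ⟨hyz, hz⟩ => ⟨hxy.trans hyz, hz⟩⟩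
  rcases hA.reaches_total hxy hxz with hyz | hzy
  exacts [hyz, NoOutArc.eq_of_reaches hz hzy ▸ .refl]

theorem inTreeRootedAt_insert_iff (hx : ¬Reaches C x u) (hz : z ≠ u) :
    InTreeRootedAt (insert (u, v) C) x z ↔ InTreeRootedAt C x z := by
  refine ⟨fun ⟨hxz, hzr⟩ => ⟨?_, fun e he => hzr e (mem_insert_of_mem he)⟩,
    fun ⟨hxz, hzr⟩ => ⟨reaches_mono (subset_insert _ _) hxz, fun e he => ?_⟩⟩
  · rcases reaches_insert hxz with h | ⟨h, -⟩
    exacts [h, absurd h hx]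
  · rcases mem_insert.mp he with rfl | he
    exacts [hz.symm, hzr e he]

theorem inTreeRootedAt_insert_self_iff (hu : NoOutArc C u) (hv : ¬Reaches C v u) (hz : u ≠ z) :
    InTreeRootedAt (insert (u, v) C) u z ↔ InTreeRootedAt C v z := by
  rw [← inTreeRootedAt_insert_iff hv hz.symm]
  refine ⟨fun ⟨huz, hzr⟩ => ⟨?_, hzr⟩, fun ⟨hvz, hzr⟩ => ⟨.head (mem_insert_self _ _) hvz, hzr⟩⟩
  rcases Relation.ReflTransGen.cases_head huz with h | ⟨w, huw, hwz⟩
  · exact absurd h hz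
  · rcases mem_insert.mp huw with huw | huw
    · rwa [(Prod.mk.inj huw).2] at hwz
    · exact absurd rfl (hu _ huw)

theorem IsInForest.not_reaches_and_inTreeRootedAt_insert_iff (hC : IsInForest W C)
    (hu : NoOutArc C u) (hz : u ≠ z) :
    ¬Reaches C v u ∧ InTreeRootedAt (insert (u, v) C) u z ↔ InTreeRootedAt C v z := by
  refine ⟨fun ⟨hv, h⟩ => (inTreeRootedAt_insert_self_iff hu hv hz).mp h, fun h => ?_⟩
  have hv : ¬Reaches C v u := fun hvu =>
    hz (hu.eq_of_reaches ((hC.inTreeRootedAt_iff_of_reaches hvu).mp h).1)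
  exact ⟨hv, (inTreeRootedAt_insert_self_iff hu hv hz).mpr h⟩

end InForest

section ForestSums

open scoped Classical

variable {n : ℕ} {W : Matrix (Fin n) (Fin n) ℝ} {A C : Finset (Fin n × Fin n)} {i j l m : Fin n}
  {k : ℕ}

noncomputable def kForests (W : Matrix (Fin n) (Fin n) ℝ) (k : ℕ) :
    Finset (Finset (Fin n × Fin n)) :=
  univ.filter fun A => IsInForest W A ∧ A.card = k

noncomputable def arcForestPairs (W : Matrix (Fin n) (Fin n) ℝ) (i : Fin n) (k : ℕ) :
    Finset (Fin n × Finset (Fin n × Fin n)) :=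
  univ.filter (IsArc W i) ×ˢ kForests W k

def arcForestWeight (W : Matrix (Fin n) (Fin n) ℝ) (i : Fin n)
    (p : Fin n × Finset (Fin n × Fin n)) : ℝ :=
  W i p.1 * forestWeight W p.2

theorem mem_kForests : A ∈ kForests W k ↔ IsInForest W A ∧ A.card = k := by
  simp [kForests]

theorem mem_arcForestPairs {p : Fin n × Finset (Fin n × Fin n)} :
    p ∈ arcForestPairs W i k ↔ IsArc W i p.1 ∧ IsInForest W p.2 ∧ p.2.card = k := by
  simp [arcForestPairs, mem_kForests]

theorem sigmaW_eq_sum : sigmaW W k = ∑ A ∈ kForests W k, forestWeight W A := by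
  rw [sigmaW, powerset_univ]
  rfl

theorem forestMatrix_apply :
    forestMatrix W k i j =
      ∑ A ∈ (kForests W k).filter (InTreeRootedAt · i j), forestWeight W A := by
  rw [forestMatrix, of_apply, powerset_univ, kForests, filter_filter]
  simp only [and_assoc]

theorem sum_filter_not_noOutArc_kForests_succ (k : ℕ) (i : Fin n)
    (Q : Finset (Fin n × Fin n) → Prop) :
    ∑ A ∈ ((kForests W (k + 1)).filter fun A => ¬NoOutArc A i).filter Q, forestWeight W A =
      ∑ p ∈ ((arcForestPairs W i k).filter fun p => NoOutArc p.2 i ∧ ¬Reaches p.2 p.1 i).filter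
        (fun p => Q (insert (i, p.1) p.2)), arcForestWeight W i p := by
  symm
  refine sum_filter_nbij' (M := ℝ) (fun p => insert (i, p.1) p.2)
    (fun A => (outNeighbor A i, A.erase (i, outNeighbor A i))) (fun p hp => ?_) (fun A hA => ?_)
    (fun p hp => ?_) (fun A hA => ?_) (fun _ _ => Iff.rfl) (fun p hp => ?_)
  · obtain ⟨⟨hl, hF, hk⟩, hi, hli⟩ := mem_filter.mp hp |>.imp_left mem_arcForestPairs.mp
    refine mem_filter.mpr ⟨mem_kForests.mpr ⟨hF.insert_of_noOutArc hi hli hl, ?_⟩,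
      fun h => h _ (mem_insert_self _ _) rfl⟩
    rw [card_insert_of_notMem hi.notMem, hk]
  · obtain ⟨hA, hi⟩ := mem_filter.mp hA
    obtain ⟨hF, hk⟩ := mem_kForests.mp hA
    obtain ⟨m, C, rfl, hC⟩ := hF.exists_eq_insert hi
    rw [hF.outNeighbor_eq (mem_insert_self _ _), erase_insert hC.notMem]
    refine mem_filter.mpr ⟨mem_arcForestPairs.mpr ⟨hF.isArc (mem_insert_self _ _),
      hF.mono (subset_insert _ _), ?_⟩, hC, hF.not_reaches_of_insert⟩
    rwa [card_insert_of_notMem hC.notMem, Nat.add_right_cancel_iff] at hk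
  · obtain ⟨⟨hl, hF, -⟩, hi, hli⟩ := mem_filter.mp hp |>.imp_left mem_arcForestPairs.mp
    rw [(hF.insert_of_noOutArc hi hli hl).outNeighbor_eq (mem_insert_self _ _),
      erase_insert hi.notMem]
  · obtain ⟨hA, hi⟩ := mem_filter.mp hA
    obtain ⟨hF, -⟩ := mem_kForests.mp hA
    obtain ⟨m, C, rfl, hC⟩ := hF.exists_eq_insert hi
    rw [hF.outNeighbor_eq (mem_insert_self _ _), erase_insert hC.notMem]
  · rw [forestWeight_insert (mem_filter.mp hp).2.1.notMem]
    rfl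

-- If `l` reaches `i` once the out-arc of `i` is removed, then adding `i → l` would close a cycle.
noncomputable def swapOutArc (i : Fin n) (p : Fin n × Finset (Fin n × Fin n)) :
    Fin n × Finset (Fin n × Fin n) :=
  if Reaches (p.2.erase (i, outNeighbor p.2 i)) p.1 i then p
  else (outNeighbor p.2 i, insert (i, p.1) (p.2.erase (i, outNeighbor p.2 i)))

theorem IsInForest.swapOutArc_insert (hA : IsInForest W (insert (i, m) C)) (hC : NoOutArc C i) :
    swapOutArc i (l, insert (i, m) C) =
      if Reaches C l i then (l, insert (i, m) C) else (m, insert (i, l) C) := by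
  rw [swapOutArc, hA.outNeighbor_eq (mem_insert_self _ _), erase_insert hC.notMem]

theorem forall_mem_filter_not_noOutArc {P : Fin n × Finset (Fin n × Fin n) → Prop}
    (h : ∀ l m C, IsArc W i l → IsInForest W (insert (i, m) C) → (insert (i, m) C).card = k →
      NoOutArc C i → P (l, insert (i, m) C)) :
    ∀ p ∈ (arcForestPairs W i k).filter (fun p => ¬NoOutArc p.2 i), P p := by
  rintro ⟨l, A⟩ hp
  obtain ⟨⟨hl, hA, hk⟩, hi⟩ := mem_filter.mp hp |>.imp_left mem_arcForestPairs.mp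
  obtain ⟨m, C, rfl, hC⟩ := hA.exists_eq_insert hi
  exact h l m C hl hA hk hC

theorem swapOutArc_mem (hl : IsArc W i l) (hA : IsInForest W (insert (i, m) C))
    (hk : (insert (i, m) C).card = k) (hC : NoOutArc C i) :
    swapOutArc i (l, insert (i, m) C) ∈
      (arcForestPairs W i k).filter (fun p => ¬NoOutArc p.2 i) := by
  rw [hA.swapOutArc_insert hC]
  split_ifs with hli
  · exact mem_filter.mpr ⟨mem_arcForestPairs.mpr ⟨hl, hA, hk⟩,
      fun h => h _ (mem_insert_self _ _) rfl⟩
  · refine mem_filter.mpr ⟨mem_arcForestPairs.mpr ⟨hA.isArc (mem_insert_self _ _),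
      (hA.mono (subset_insert _ _)).insert_of_noOutArc hC hli hl, ?_⟩,
      fun h => h _ (mem_insert_self _ _) rfl⟩
    rwa [card_insert_of_notMem hC.notMem] at hk ⊢

theorem swapOutArc_swapOutArc (hl : IsArc W i l) (hA : IsInForest W (insert (i, m) C))
    (hC : NoOutArc C i) :
    swapOutArc i (swapOutArc i (l, insert (i, m) C)) = (l, insert (i, m) C) := by
  rw [hA.swapOutArc_insert hC]
  split_ifs with hli
  · rw [hA.swapOutArc_insert hC, if_pos hli]
  · rw [((hA.mono (subset_insert _ _)).insert_of_noOutArc hC hli hl).swapOutArc_insert hC,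
      if_neg hA.not_reaches_of_insert]

theorem arcForestWeight_swapOutArc (hA : IsInForest W (insert (i, m) C)) (hC : NoOutArc C i) :
    arcForestWeight W i (swapOutArc i (l, insert (i, m) C)) =
      arcForestWeight W i (l, insert (i, m) C) := by
  rw [hA.swapOutArc_insert hC]
  split_ifs
  · rfl
  · simp only [arcForestWeight, forestWeight_insert hC.notMem]
    ring

theorem inTreeRootedAt_swapOutArc_iff (hA : IsInForest W (insert (i, m) C)) (hC : NoOutArc C i)
    (hij : i ≠ j) :
    InTreeRootedAt (insert (i, m) C) l j ↔
      InTreeRootedAt (swapOutArc i (l, insert (i, m) C)).2 i j := by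
  rw [hA.swapOutArc_insert hC]
  split_ifs with hli
  · exact hA.inTreeRootedAt_iff_of_reaches (reaches_mono (subset_insert _ _) hli)
  · rw [inTreeRootedAt_insert_iff hli hij.symm, inTreeRootedAt_insert_self_iff hC hli hij]

theorem sum_filter_inTreeRootedAt_swapOutArc (hij : i ≠ j) :
    ∑ p ∈ ((arcForestPairs W i k).filter fun p => ¬NoOutArc p.2 i).filter
        (fun p => InTreeRootedAt p.2 p.1 j), arcForestWeight W i p =
      ∑ p ∈ ((arcForestPairs W i k).filter fun p => ¬NoOutArc p.2 i).filter
        (fun p => InTreeRootedAt p.2 i j), arcForestWeight W i p :=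
  sum_filter_nbij' (M := ℝ) (swapOutArc i) (swapOutArc i)
    (forall_mem_filter_not_noOutArc fun _ _ _ hl hA hk hC => swapOutArc_mem hl hA hk hC)
    (forall_mem_filter_not_noOutArc fun _ _ _ hl hA hk hC => swapOutArc_mem hl hA hk hC)
    (forall_mem_filter_not_noOutArc fun _ _ _ hl hA _ hC => swapOutArc_swapOutArc hl hA hC)
    (forall_mem_filter_not_noOutArc fun _ _ _ hl hA _ hC => swapOutArc_swapOutArc hl hA hC)
    (forall_mem_filter_not_noOutArc fun _ _ _ _ hA _ hC => inTreeRootedAt_swapOutArc_iff hA hC hij)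
    (forall_mem_filter_not_noOutArc fun _ _ _ _ hA _ hC =>
      (arcForestWeight_swapOutArc hA hC).symm)

theorem lap_mul_apply (hW : ∀ i j, 0 ≤ W i j) {o : Type*} (M : Matrix (Fin n) o ℝ) (i : Fin n)
    (j : o) : (lap W * M) i j = ∑ l ∈ univ.filter (IsArc W i), W i l * (M i j - M l j) := by
  have h : (lap W * M) i j = ∑ l, W i l * (M i j - M l j) := by
    rw [lap, Matrix.sub_mul, Matrix.sub_apply, diagonal_mul, mul_apply, sum_mul,
      ← sum_sub_distrib]
    simp only [mul_sub]
  rw [h, sum_filter]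
  refine sum_congr rfl fun l _ => (ite_eq_left_iff.mpr fun hl => ?_).symm
  rcases not_and_or.mp hl with hil | hpos
  · rw [not_not.mp hil, sub_self, mul_zero]
  · rw [le_antisymm (not_lt.mp hpos) (hW i l), zero_mul]

theorem lap_mul_forestMatrix_apply (hW : ∀ i j, 0 ≤ W i j) (k : ℕ) (i j : Fin n) :
    (lap W * forestMatrix W k) i j =
      ∑ p ∈ (arcForestPairs W i k).filter (fun p => InTreeRootedAt p.2 i j),
          arcForestWeight W i p -
        ∑ p ∈ (arcForestPairs W i k).filter (fun p => InTreeRootedAt p.2 p.1 j),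
          arcForestWeight W i p := by
  simp only [lap_mul_apply hW, mul_sub, sum_sub_distrib, forestMatrix_apply, sum_mul_sum_filter]
  rfl

theorem forestMatrix_succ_add_lap_mul_apply_of_ne (hW : ∀ i j, 0 ≤ W i j) (k : ℕ) (hij : i ≠ j) :
    forestMatrix W (k + 1) i j + (lap W * forestMatrix W k) i j = 0 := by
  set P := arcForestPairs W i k
  have hQ : forestMatrix W (k + 1) i j = ∑ p ∈ (P.filter fun p => InTreeRootedAt p.2 p.1 j).filter
      (fun p => NoOutArc p.2 i), arcForestWeight W i p := by
    have h : (kForests W (k + 1)).filter (InTreeRootedAt · i j) =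
        ((kForests W (k + 1)).filter fun A => ¬NoOutArc A i).filter (InTreeRootedAt · i j) := by
      rw [filter_filter]
      exact filter_congr fun A _ => ⟨fun h => ⟨h.not_noOutArc hij, h⟩, And.right⟩
    rw [forestMatrix_apply, h, sum_filter_not_noOutArc_kForests_succ, filter_filter, filter_filter]
    refine sum_congr (filter_congr fun p hp => ?_) fun _ _ => rfl
    obtain ⟨-, hF, -⟩ := mem_arcForestPairs.mp hp
    by_cases hi : NoOutArc p.2 i
    · rw [← hF.not_reaches_and_inTreeRootedAt_insert_iff hi hij]
      tauto
    · tauto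
  have hL : ∑ p ∈ P.filter (fun p => InTreeRootedAt p.2 i j), arcForestWeight W i p =
      ∑ p ∈ (P.filter fun p => InTreeRootedAt p.2 p.1 j).filter (fun p => ¬NoOutArc p.2 i),
        arcForestWeight W i p := by
    rw [filter_comm, sum_filter_inTreeRootedAt_swapOutArc hij, filter_filter]
    exact sum_congr (filter_congr fun p _ => ⟨fun h => ⟨h.not_noOutArc hij, h⟩, And.right⟩)
      fun _ _ => rfl
  rw [lap_mul_forestMatrix_apply hW, hQ, hL,
    ← sum_filter_add_sum_filter_not (P.filter _) (fun p => NoOutArc p.2 i)]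
  ring

theorem forestMatrix_succ_add_lap_mul_apply_self (hW : ∀ i j, 0 ≤ W i j) (k : ℕ) (i : Fin n) :
    forestMatrix W (k + 1) i i + (lap W * forestMatrix W k) i i = sigmaW W (k + 1) := by
  set P := arcForestPairs W i k
  have hQ : forestMatrix W (k + 1) i i =
      ∑ A ∈ (kForests W (k + 1)).filter (NoOutArc · i), forestWeight W A := by
    rw [forestMatrix_apply]
    exact sum_congr (filter_congr fun _ _ => inTreeRootedAt_self) fun _ _ => rfl
  have hσ : ∑ A ∈ (kForests W (k + 1)).filter (¬NoOutArc · i), forestWeight W A =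
      ∑ p ∈ P.filter (fun p => NoOutArc p.2 i ∧ ¬Reaches p.2 p.1 i), arcForestWeight W i p := by
    simpa only [filter_true] using sum_filter_not_noOutArc_kForests_succ (W := W) k i fun _ => True
  have hL : ∑ p ∈ P.filter (fun p => InTreeRootedAt p.2 i i), arcForestWeight W i p =
      ∑ p ∈ P.filter (fun p => InTreeRootedAt p.2 p.1 i), arcForestWeight W i p +
        ∑ p ∈ P.filter (fun p => NoOutArc p.2 i ∧ ¬Reaches p.2 p.1 i), arcForestWeight W i p := by
    rw [← sum_filter_add_sum_filter_not (P.filter fun p => InTreeRootedAt p.2 i i)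
      (fun p => Reaches p.2 p.1 i), filter_filter, filter_filter]
    congr 1 <;> refine sum_congr (filter_congr fun p _ => ?_) fun _ _ => rfl
    · exact ⟨fun ⟨h, hr⟩ => ⟨hr, h.2⟩, fun h => ⟨⟨.refl, h.2⟩, h.1⟩⟩
    · exact and_congr_left' inTreeRootedAt_self
  rw [lap_mul_forestMatrix_apply hW, hQ, hL, sigmaW_eq_sum,
    ← sum_filter_add_sum_filter_not (kForests W (k + 1)) (NoOutArc · i), hσ]
  ring

end ForestSums

section ForestMatrix

open scoped Classical

variable {n : ℕ} {W : Matrix (Fin n) (Fin n) ℝ} {A : Finset (Fin n × Fin n)} {k : ℕ}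

theorem forestMatrix_succ (hW : ∀ i j, 0 ≤ W i j) (k : ℕ) :
    forestMatrix W (k + 1) = sigmaW W (k + 1) • 1 - lap W * forestMatrix W k := by
  ext i j
  rw [Matrix.sub_apply, Matrix.smul_apply, one_apply, eq_sub_iff_add_eq]
  split_ifs with hij
  · subst hij
    simpa using forestMatrix_succ_add_lap_mul_apply_self hW k i
  · simpa using forestMatrix_succ_add_lap_mul_apply_of_ne hW k hij

theorem kForests_zero : kForests W 0 = {∅} := by
  ext A
  rw [mem_kForests, card_eq_zero, mem_singleton]
  exact ⟨And.right, fun hA => ⟨hA ▸ isInForest_empty, hA⟩⟩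

theorem forestMatrix_zero : forestMatrix W 0 = 1 := by
  ext i j
  rw [forestMatrix_apply, kForests_zero, filter_singleton, one_apply]
  simp only [inTreeRootedAt_empty]
  split_ifs
  exacts [sum_singleton _ _, sum_empty]

theorem sigmaW_zero : sigmaW W 0 = 1 := by
  rw [sigmaW_eq_sum, kForests_zero, sum_singleton]
  rfl

theorem IsInForest.card_le_maxForestCard (hA : IsInForest W A) : A.card ≤ maxForestCard W :=
  le_sup (f := card) (mem_filter.mpr ⟨mem_powerset.mpr (subset_univ A), hA⟩)

theorem kForests_eq_empty (hk : maxForestCard W < k) : kForests W k = ∅ :=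
  eq_empty_of_forall_notMem fun A hA => by
    obtain ⟨hF, rfl⟩ := mem_kForests.mp hA
    exact hk.not_ge hF.card_le_maxForestCard

theorem forestMatrix_eq_zero (hk : maxForestCard W < k) : forestMatrix W k = 0 := by
  ext i j
  rw [forestMatrix_apply, kForests_eq_empty hk, filter_empty, sum_empty, Matrix.zero_apply]

theorem sigmaW_eq_zero (hk : maxForestCard W < k) : sigmaW W k = 0 := by
  rw [sigmaW_eq_sum, kForests_eq_empty hk, sum_empty]

theorem sigmaW_maxForestCard_pos : 0 < sigmaW W (maxForestCard W) := by
  obtain ⟨A, hA, hmax⟩ := exists_mem_eq_sup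
    (univ.powerset.filter fun A : Finset (Fin n × Fin n) => IsInForest W A)
    ⟨∅, mem_filter.mpr ⟨empty_mem_powerset _, isInForest_empty⟩⟩ card
  rw [sigmaW_eq_sum]
  exact sum_pos (fun B hB => (mem_kForests.mp hB).1.forestWeight_pos)
    ⟨A, mem_kForests.mpr ⟨(mem_filter.mp hA).2, hmax.symm⟩⟩

theorem commute_lap_forestMatrix (hW : ∀ i j, 0 ≤ W i j) (k : ℕ) :
    Commute (lap W) (forestMatrix W k) := by
  induction k with
  | zero => exact forestMatrix_zero (W := W) ▸ Commute.one_right _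
  | succ k ih =>
    rw [forestMatrix_succ hW]
    exact ((Commute.one_right _).smul_right _).sub_right ((Commute.refl _).mul_right ih)

theorem lap_mul_forestMatrix_maxForestCard (hW : ∀ i j, 0 ≤ W i j) :
    lap W * forestMatrix W (maxForestCard W) = 0 := by
  have h := forestMatrix_succ hW (maxForestCard W)
  rwa [forestMatrix_eq_zero (lt_add_one _), sigmaW_eq_zero (lt_add_one _), zero_smul, zero_sub,
    zero_eq_neg] at h

theorem forestMatrix_mulVec_of_lap_mulVec_eq_zero (hW : ∀ i j, 0 ≤ W i j) {v : Fin n → ℝ}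
    (hv : lap W *ᵥ v = 0) : ∀ k, forestMatrix W k *ᵥ v = sigmaW W k • v
  | 0 => by rw [forestMatrix_zero, sigmaW_zero, one_mulVec, one_smul]
  | k + 1 => by
    rw [forestMatrix_succ hW, sub_mulVec, smul_mulVec, one_mulVec,
      (commute_lap_forestMatrix hW k).eq, ← mulVec_mulVec, hv, mulVec_zero, sub_zero]

theorem lap_mul_Jtilde (hW : ∀ i j, 0 ≤ W i j) : lap W * Jtilde W = 0 := by
  rw [Jtilde, mul_smul_comm, lap_mul_forestMatrix_maxForestCard hW, smul_zero]

theorem Jtilde_mul_lap (hW : ∀ i j, 0 ≤ W i j) : Jtilde W * lap W = 0 := by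
  rw [Jtilde, smul_mul_assoc, ← (commute_lap_forestMatrix hW _).eq,
    lap_mul_forestMatrix_maxForestCard hW, smul_zero]

theorem Jtilde_mulVec_of_lap_mulVec_eq_zero (hW : ∀ i j, 0 ≤ W i j) {v : Fin n → ℝ}
    (hv : lap W *ᵥ v = 0) : Jtilde W *ᵥ v = v := by
  rw [Jtilde, smul_mulVec, forestMatrix_mulVec_of_lap_mulVec_eq_zero hW hv, smul_smul,
    inv_mul_cancel₀ sigmaW_maxForestCard_pos.ne', one_smul]

end ForestMatrix

theorem groupInverse_lap_representation_general {n : ℕ} (W : Matrix (Fin n) (Fin n) ℝ)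
    (hW : ∀ i j, 0 ≤ W i j) :
    ∃ X : Matrix (Fin n) (Fin n) ℝ,
      lap W * X * lap W = lap W ∧ X * lap W * X = X ∧ lap W * X = X * lap W ∧
      (∀ α : ℝ, α ≠ 0 →
        X = (lap W + α • Jtilde W)⁻¹ - α⁻¹ • Jtilde W ∧
        X = (lap W + α • Jtilde W)⁻¹ * (1 - Jtilde W)) ∧
      Jtilde W = 1 - lap W * X :=
  exists_groupInverse_of_mulVec_eq_self (lap_mul_Jtilde hW) (Jtilde_mul_lap hW)
    fun _ => Jtilde_mulVec_of_lap_mulVec_eq_zero hW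

/-- The group inverse `L^#` of the Laplacian exists and satisfies, for every
`α ≠ 0`, `L^# = (L + αJ̃)⁻¹ − α⁻¹ J̃ = (L + αJ̃)⁻¹ (I − J̃)`, and `J̃ = I − L L^#`. -/
theorem groupInverse_lap_representation {n : ℕ} (W : Matrix (Fin n) (Fin n) ℝ)
    (hn : 1 < n) (hW : ∀ i j, 0 ≤ W i j) (hdiag : ∀ i, W i i = 0) :
    ∃ X : Matrix (Fin n) (Fin n) ℝ,
      lap W * X * lap W = lap W ∧ X * lap W * X = X ∧ lap W * X = X * lap W ∧
      (∀ α : ℝ, α ≠ 0 →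
        X = (lap W + α • Jtilde W)⁻¹ - α⁻¹ • Jtilde W ∧
        X = (lap W + α • Jtilde W)⁻¹ * (1 - Jtilde W)) ∧
      Jtilde W = 1 - lap W * X :=
  groupInverse_lap_representation_general W hW
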